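/- In the model of S²×R with infinitesimal arc-length (ds)² = (dt)² + cos²θ (dφ)² + (dθ)², the distance from the base point P₁ = (1,0,0) to a point P₂ = (d,e,f) with d²+e²+f² ≠ 0 equals √( arccos(d/√(d²+e²+f²))² + (log √(d²+e²+f²))² ). -/

import Mathlib

/-!
In log-polar coordinates `v ↦ (v / ‖v‖, log ‖v‖)` the metric `‖dv‖² / ‖v‖²` is the product metric
of the unit sphere and the line, so the distance should be
`logPolarDist v w = √(angle v w ^ 2 + (log ‖w‖ - log ‖v‖) ^ 2)`.

Lower bound: `logPolarDist` satisfies the triangle inequality (the triangle inequality for angles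
plus Minkowski's inequality in the plane), and `logPolarDist (γ x) (γ z) / (z - x)` tends to
`‖γ' x‖ / ‖γ x‖`. Hence along any path the right Dini derivative of `logPolarDist (γ 0) (γ τ)` is
at most the integrand of the length, and a comparison theorem for Dini derivatives gives
`logPolarDist (γ 0) (γ 1) ≤ length γ`.

Upper bound: the logarithmic spiral `τ ↦ exp (T τ) • (cos (α τ) • a + sin (α τ) • b)` in the plane
of `a` and `q` has constant speed `√(T ^ 2 + α ^ 2) = logPolarDist a q` for `T = log ‖q‖` and
`α = angle a q`.
-/

open Real InnerProductGeometry Filter Topology Set MeasureTheory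
open scoped RealInnerProductSpace

lemma sqrt_add_sq_add_sq_le (a b c d : ℝ) :
    √((a + b) ^ 2 + (c + d) ^ 2) ≤ √(a ^ 2 + c ^ 2) + √(b ^ 2 + d ^ 2) := by
  simpa [Complex.norm_eq_sqrt_sq_add_sq] using norm_add_le (⟨a, c⟩ : ℂ) ⟨b, d⟩

variable {V : Type*} [NormedAddCommGroup V] [InnerProductSpace ℝ V]

noncomputable def logPolarDist (v w : V) : ℝ :=
  √(angle v w ^ 2 + (log ‖w‖ - log ‖v‖) ^ 2)

lemma logPolarDist_self {v : V} (hv : v ≠ 0) : logPolarDist v v = 0 := by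
  simp [logPolarDist, angle_self hv]

lemma logPolarDist_triangle (u v w : V) :
    logPolarDist u w ≤ logPolarDist u v + logPolarDist v w := by
  calc logPolarDist u w
      ≤ √((angle u v + angle v w) ^ 2 + (log ‖w‖ - log ‖u‖) ^ 2) := by
        unfold logPolarDist
        gcongr
        · exact angle_nonneg u w
        · exact angle_le_angle_add_angle u v w
    _ ≤ logPolarDist u v + logPolarDist v w := by
        simpa [logPolarDist] using sqrt_add_sq_add_sq_le (angle u v) (angle v w)
          (log ‖v‖ - log ‖u‖) (log ‖w‖ - log ‖v‖)

lemma norm_sub_inner_smul_sq (a w : V) (ha : a ≠ 0) :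
    ‖w - (⟪a, w⟫ / ‖a‖ ^ 2) • a‖ ^ 2 = ‖w‖ ^ 2 - ⟪a, w⟫ ^ 2 / ‖a‖ ^ 2 := by
  have : ‖a‖ ≠ 0 := norm_ne_zero_iff.2 ha
  rw [norm_sub_sq_real, real_inner_smul_right, real_inner_comm, norm_smul, Real.norm_eq_abs,
    mul_pow, sq_abs]
  field_simp
  ring

lemma sin_angle_mul_norm (a w : V) (ha : a ≠ 0) :
    sin (angle a w) * ‖w‖ = ‖w - (⟪a, w⟫ / ‖a‖ ^ 2) • a‖ := by
  have hpos : 0 < ‖a‖ := norm_pos_iff.2 ha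
  have hcs : ⟪a, w⟫ ^ 2 ≤ ‖a‖ ^ 2 * ‖w‖ ^ 2 := by
    rw [← mul_pow, ← sq_abs]
    exact pow_le_pow_left₀ (abs_nonneg _) (abs_real_inner_le_norm a w) 2
  have key := congrArg (· ^ 2) (sin_angle_mul_norm_mul_norm a w)
  simp only [real_inner_self_eq_norm_sq, ← sq] at key
  rw [Real.sq_sqrt (by linarith)] at key
  rw [← sq_eq_sq₀ (mul_nonneg (sin_angle_nonneg a w) (norm_nonneg w)) (norm_nonneg _),
    norm_sub_inner_smul_sq a w ha]
  field_simp
  linear_combination key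

section Infinitesimal

variable {γ : ℝ → V} {γ' : V} {x : ℝ}

lemma hasDerivAt_log_norm (hγ : HasDerivAt γ γ' x) (hx : γ x ≠ 0) :
    HasDerivAt (fun τ => log ‖γ τ‖) (⟪γ x, γ'⟫ / ‖γ x‖ ^ 2) x := by
  have h := (hγ.norm_sq.log (by positivity)).div_const 2
  have hfun : (fun τ => log (‖γ τ‖ ^ 2) / 2) = fun τ => log ‖γ τ‖ := by
    funext τ
    rw [Real.log_pow]
    push_cast
    ring
  rw [hfun] at h
  exact h.congr_deriv (by ring)

lemma tendsto_slope_nhdsGT {f : ℝ → V} {f' : V} (hf : HasDerivAt f f' x) :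
    Tendsto (fun z => (z - x)⁻¹ • (f z - f x)) (𝓝[>] x) (𝓝 f') :=
  hf.tendsto_slope.mono_left (nhdsGT_le_nhdsNE x)

/- `sin θ` is the norm of the rejection of `γ z` from `γ x`, divided by `‖γ z‖`, which is
differentiable; then squeeze `θ` between `sin θ` and `tan θ`. -/
lemma tendsto_angle_div_sub (hγ : HasDerivAt γ γ' x) (hx : γ x ≠ 0) :
    Tendsto (fun z => angle (γ x) (γ z) / (z - x)) (𝓝[>] x)
      (𝓝 (‖γ' - (⟪γ x, γ'⟫ / ‖γ x‖ ^ 2) • γ x‖ / ‖γ x‖)) := by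
  set a := γ x
  have hnx : ‖a‖ ≠ 0 := norm_ne_zero_iff.2 hx
  set ρ : V → V := fun v => v - (⟪a, v⟫ / ‖a‖ ^ 2) • a with hρ
  have hρa : ρ a = 0 := by
    simp only [hρ, real_inner_self_eq_norm_sq, div_self (pow_ne_zero 2 hnx), one_smul, sub_self]
  have hργ : HasDerivAt (fun τ => ρ (γ τ)) (ρ γ') x :=
    hγ.sub (((hasDerivAt_const x a).inner ℝ hγ).div_const _ |>.smul_const a) |>.congr_deriv
      (by simp [ρ, a])
  have hcont : ContinuousAt γ x := hγ.continuousAt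
  have hne : ∀ᶠ z in 𝓝[>] x, x < z ∧ γ z ≠ 0 :=
    eventually_mem_nhdsWithin.and (nhdsWithin_le_nhds (hcont.eventually_ne hx))
  have hθ : Tendsto (fun z => angle a (γ z)) (𝓝[>] x) (𝓝 0) := by
    have := (continuousAt_angle (x := (a, a)) hx hx).comp_of_eq
      (continuousAt_const.prodMk hcont : ContinuousAt (fun z => (a, γ z)) x) rfl
    have h := this.tendsto.mono_left (nhdsWithin_le_nhds (s := Ioi x))
    simp only [Function.comp_def] at h
    rwa [show angle a (γ x) = 0 from angle_self hx] at h
  have hsin : Tendsto (fun z => sin (angle a (γ z)) / (z - x)) (𝓝[>] x)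
      (𝓝 (‖ρ γ'‖ / ‖a‖)) := by
    have h : Tendsto (fun z => ‖(z - x)⁻¹ • (ρ (γ z) - ρ a)‖ / ‖γ z‖) (𝓝[>] x)
        (𝓝 (‖ρ γ'‖ / ‖a‖)) :=
      (tendsto_slope_nhdsGT hργ).norm.div (hcont.norm.tendsto.mono_left nhdsWithin_le_nhds) hnx
    refine h.congr' (hne.mono fun z ⟨hz, hγz⟩ => ?_)
    rw [hρa, sub_zero, norm_smul, norm_inv, Real.norm_eq_abs, abs_of_pos (sub_pos.2 hz),
      ← sin_angle_mul_norm a (γ z) hx]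
    field_simp [norm_ne_zero_iff.2 hγz]
  have hupper : Tendsto (fun z => sin (angle a (γ z)) / (z - x) / cos (angle a (γ z)))
      (𝓝[>] x) (𝓝 (‖ρ γ'‖ / ‖a‖)) := by
    have hcos : Tendsto (fun z => cos (angle a (γ z))) (𝓝[>] x) (𝓝 1) := by
      have h := (continuous_cos.tendsto 0).comp hθ
      rwa [cos_zero] at h
    have h := hsin.div hcos one_ne_zero
    rwa [div_one] at h
  refine tendsto_of_tendsto_of_tendsto_of_le_of_le' hsin hupper ?_ ?_
  · filter_upwards [hne] with z ⟨hz, _⟩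
    exact div_le_div_of_nonneg_right (sin_le (angle_nonneg _ _)) (sub_pos.2 hz).le
  · filter_upwards [hne, hθ (Iio_mem_nhds (by positivity : (0 : ℝ) < π / 2))]
      with z ⟨hz, _⟩ hθz
    rw [div_right_comm, ← tan_eq_sin_div_cos]
    exact div_le_div_of_nonneg_right (le_tan (angle_nonneg _ _) hθz) (sub_pos.2 hz).le

lemma tendsto_logPolarDist_div_sub (hγ : HasDerivAt γ γ' x) (hx : γ x ≠ 0) :
    Tendsto (fun z => logPolarDist (γ x) (γ z) / (z - x)) (𝓝[>] x) (𝓝 (‖γ'‖ / ‖γ x‖)) := by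
  have hnx : ‖γ x‖ ≠ 0 := norm_ne_zero_iff.2 hx
  have hlog : Tendsto (fun z => (log ‖γ z‖ - log ‖γ x‖) / (z - x)) (𝓝[>] x)
      (𝓝 (⟪γ x, γ'⟫ / ‖γ x‖ ^ 2)) := by
    simpa [smul_eq_mul, div_eq_inv_mul] using tendsto_slope_nhdsGT (hasDerivAt_log_norm hγ hx)
  have hpythagoras : √((‖γ' - (⟪γ x, γ'⟫ / ‖γ x‖ ^ 2) • γ x‖ / ‖γ x‖) ^ 2
      + (⟪γ x, γ'⟫ / ‖γ x‖ ^ 2) ^ 2) = ‖γ'‖ / ‖γ x‖ := by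
    rw [div_pow, norm_sub_inner_smul_sq _ _ hx,
      ← Real.sqrt_sq (by positivity : 0 ≤ ‖γ'‖ / ‖γ x‖)]
    congr 1
    field_simp
    ring
  rw [← hpythagoras]
  refine (((tendsto_angle_div_sub hγ hx).pow 2).add (hlog.pow 2)).sqrt.congr' ?_
  filter_upwards [eventually_mem_nhdsWithin] with z hz
  rw [logPolarDist, div_pow, div_pow, ← add_div, Real.sqrt_div' _ (sq_nonneg _),
    Real.sqrt_sq (sub_pos.2 hz).le]

end Infinitesimal

theorem logPolarDist_le_integral {γ γ' : ℝ → V} {a b : ℝ} (hab : a ≤ b)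
    (hγ : ∀ τ, HasDerivAt γ (γ' τ) τ) (hγ' : Continuous γ') (hne : ∀ τ ∈ Icc a b, γ τ ≠ 0) :
    logPolarDist (γ a) (γ b) ≤ ∫ τ in a..b, ‖γ' τ‖ / ‖γ τ‖ := by
  have hγc : Continuous γ := continuous_iff_continuousAt.2 fun τ => (hγ τ).continuousAt
  have hψ : ∀ τ ∈ Icc a b, ContinuousAt (fun τ => ‖γ' τ‖ / ‖γ τ‖) τ := fun τ hτ =>
    hγ'.norm.continuousAt.div hγc.norm.continuousAt (norm_ne_zero_iff.2 (hne τ hτ))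
  have hψ_int : IntegrableOn (fun τ => ‖γ' τ‖ / ‖γ τ‖) (uIcc a b) := by
    rw [uIcc_of_le hab]
    exact ContinuousOn.integrableOn_Icc fun τ hτ => (hψ τ hτ).continuousWithinAt
  have hg : ContinuousOn (fun τ => logPolarDist (γ a) (γ τ)) (Icc a b) := by
    intro τ hτ
    have hangle := (continuousAt_angle (x := (γ a, γ τ)) (hne a (left_mem_Icc.2 hab))
      (hne τ hτ)).comp_of_eq (continuousAt_const.prodMk hγc.continuousAt) rfl
    have hlog := (hγc.norm.continuousAt (x := τ)).log (norm_ne_zero_iff.2 (hne τ hτ))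
    exact ((hangle.pow 2).add ((hlog.sub continuousAt_const).pow 2)).sqrt.continuousWithinAt
  refine image_le_of_liminf_slope_right_le_deriv_boundary (B' := fun τ => ‖γ' τ‖ / ‖γ τ‖)
    hg ?_ ((intervalIntegral.continuousOn_primitive_interval hψ_int).mono (by rw [uIcc_of_le hab]))
    (fun x hx => ?_) (fun x hx r hr => ?_) (right_mem_Icc.2 hab)
  · simp [logPolarDist_self (hne a (left_mem_Icc.2 hab))]
  · have hsub : uIcc a x ⊆ uIcc a b := by
      rw [uIcc_of_le hab, uIcc_of_le hx.1]
      exact Icc_subset_Icc_right hx.2.le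
    exact intervalIntegral.integral_hasDerivWithinAt_right
      (hψ_int.mono_set hsub).intervalIntegrable
      (hγ'.norm.measurable.div hγc.norm.measurable).stronglyMeasurable.stronglyMeasurableAtFilter
      (hψ x (Ico_subset_Icc_self hx)).continuousWithinAt
  · have hlim := tendsto_logPolarDist_div_sub (hγ x) (hne x (Ico_subset_Icc_self hx))
    refine Eventually.frequently ?_
    filter_upwards [hlim.eventually (gt_mem_nhds hr), eventually_mem_nhdsWithin] with z hz hxz
    refine lt_of_le_of_lt ?_ hz
    rw [slope_def_field]
    exact div_le_div_of_nonneg_right (by linarith [logPolarDist_triangle (γ a) (γ x) (γ z)])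
      (sub_pos.2 hxz).le

lemma norm_smul_add_smul_of_orthonormal {a b : V} (ha : ‖a‖ = 1) (hb : ‖b‖ = 1)
    (hab : ⟪a, b⟫ = 0) (s t : ℝ) : ‖s • a + t • b‖ = √(s ^ 2 + t ^ 2) := by
  rw [← Real.sqrt_sq (norm_nonneg _), norm_add_sq_real, norm_smul, norm_smul,
    real_inner_smul_left, real_inner_smul_right, hab, ha, hb]
  simp

noncomputable def logPolarGeodesic (a b : V) (T α τ : ℝ) : V :=
  exp (T * τ) • (cos (α * τ) • a + sin (α * τ) • b)

noncomputable def logPolarGeodesicDeriv (a b : V) (T α τ : ℝ) : V :=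
  exp (T * τ) •
    ((T * cos (α * τ) - α * sin (α * τ)) • a + (T * sin (α * τ) + α * cos (α * τ)) • b)

lemma hasDerivAt_logPolarGeodesic (a b : V) (T α τ : ℝ) :
    HasDerivAt (logPolarGeodesic a b T α) (logPolarGeodesicDeriv a b T α τ) τ := by
  have hlin (c : ℝ) : HasDerivAt (fun τ : ℝ => c * τ) c τ := by
    simpa using (hasDerivAt_id τ).const_mul c
  have := ((hlin T).exp).smul
    ((((hlin α).cos).smul_const a).add (((hlin α).sin).smul_const b))
  refine this.congr_deriv ?_
  simp only [Pi.add_apply, logPolarGeodesicDeriv]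
  module

lemma continuous_logPolarGeodesicDeriv (a b : V) (T α : ℝ) :
    Continuous (logPolarGeodesicDeriv a b T α) := by
  unfold logPolarGeodesicDeriv
  fun_prop

lemma norm_logPolarGeodesic {a b : V} (ha : ‖a‖ = 1) (hb : ‖b‖ = 1) (hab : ⟪a, b⟫ = 0)
    (T α τ : ℝ) : ‖logPolarGeodesic a b T α τ‖ = exp (T * τ) := by
  rw [logPolarGeodesic, norm_smul, norm_smul_add_smul_of_orthonormal ha hb hab,
    cos_sq_add_sin_sq, Real.sqrt_one, mul_one, Real.norm_of_nonneg (exp_pos _).le]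

lemma norm_logPolarGeodesicDeriv {a b : V} (ha : ‖a‖ = 1) (hb : ‖b‖ = 1) (hab : ⟪a, b⟫ = 0)
    (T α τ : ℝ) : ‖logPolarGeodesicDeriv a b T α τ‖ = exp (T * τ) * √(T ^ 2 + α ^ 2) := by
  rw [logPolarGeodesicDeriv, norm_smul, norm_smul_add_smul_of_orthonormal ha hb hab,
    Real.norm_of_nonneg (exp_pos _).le]
  congr 2
  linear_combination (T ^ 2 + α ^ 2) * sin_sq_add_cos_sq (α * τ)

lemma exists_eq_norm_smul_cos_smul_add_sin_smul {a c : V} (ha : ‖a‖ = 1) (hc : ‖c‖ = 1)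
    (hac : ⟪a, c⟫ = 0) (q : V) :
    ∃ b : V, ‖b‖ = 1 ∧ ⟪a, b⟫ = 0 ∧ q = ‖q‖ • (cos (angle a q) • a + sin (angle a q) • b) := by
  have ha0 : a ≠ 0 := norm_ne_zero_iff.1 (by rw [ha]; exact one_ne_zero)
  set p := q - ⟪a, q⟫ • a
  have hsin : ‖q‖ * sin (angle a q) = ‖p‖ := by
    rw [mul_comm, sin_angle_mul_norm a q ha0, ha, one_pow, div_one]
  have hcos : ‖q‖ * cos (angle a q) = ⟪a, q⟫ := by
    have := cos_angle_mul_norm_mul_norm a q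
    rw [ha, one_mul] at this
    linarith
  have hpa : ⟪a, p⟫ = 0 := by
    simp [p, inner_sub_right, real_inner_smul_right, ha]
  suffices ∃ b : V, ‖b‖ = 1 ∧ ⟪a, b⟫ = 0 ∧ ‖p‖ • b = p by
    obtain ⟨b, hb, hab, hpb⟩ := this
    refine ⟨b, hb, hab, ?_⟩
    rw [smul_add, smul_smul, smul_smul, hcos, hsin, hpb, add_sub_cancel]
  by_cases hp0 : p = 0
  · exact ⟨c, hc, hac, by simp [hp0]⟩
  · refine ⟨‖p‖⁻¹ • p, norm_smul_inv_norm hp0, by simp [real_inner_smul_right, hpa], ?_⟩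
    rw [smul_smul, mul_inv_cancel₀ (norm_ne_zero_iff.2 hp0), one_smul]

def logPolarLengths (p q : V) : Set ℝ :=
  {L | ∃ γ γ' : ℝ → V, (∀ τ, HasDerivAt γ (γ' τ) τ) ∧ Continuous γ' ∧
    (∀ τ ∈ Icc (0 : ℝ) 1, γ τ ≠ 0) ∧ γ 0 = p ∧ γ 1 = q ∧
    L = ∫ τ in (0 : ℝ)..1, ‖γ' τ‖ / ‖γ τ‖}

theorem isLeast_logPolarLengths {a c q : V} (ha : ‖a‖ = 1) (hc : ‖c‖ = 1) (hac : ⟪a, c⟫ = 0)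
    (hq : q ≠ 0) : IsLeast (logPolarLengths a q) (logPolarDist a q) := by
  constructor
  · obtain ⟨b, hb, hab, hq_eq⟩ := exists_eq_norm_smul_cos_smul_add_sin_smul ha hc hac q
    set T := log ‖q‖
    set α := angle a q
    refine ⟨logPolarGeodesic a b T α, logPolarGeodesicDeriv a b T α,
      hasDerivAt_logPolarGeodesic a b T α, continuous_logPolarGeodesicDeriv a b T α,
      fun τ _ => ?_, by simp [logPolarGeodesic], ?_, ?_⟩
    · rw [← norm_ne_zero_iff, norm_logPolarGeodesic ha hb hab]
      positivity
    · rw [hq_eq]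
      simp [logPolarGeodesic, T, exp_log (norm_pos_iff.2 hq)]
    · simp_rw [norm_logPolarGeodesicDeriv ha hb hab, norm_logPolarGeodesic ha hb hab,
        mul_div_cancel_left₀ _ (exp_pos _).ne']
      simp [logPolarDist, ha, T, α, add_comm]
  · rintro L ⟨γ, γ', hγ, hγ', hne, rfl, rfl, rfl⟩
    exact logPolarDist_le_integral zero_le_one hγ hγ' hne

lemma norm_toLp_fin_three (v : Fin 3 → ℝ) :
    ‖(WithLp.toLp 2 v : EuclideanSpace ℝ (Fin 3))‖ = √(v 0 ^ 2 + v 1 ^ 2 + v 2 ^ 2) := by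
  simp [EuclideanSpace.norm_eq, Fin.sum_univ_three]

lemma setOf_lengths_eq_logPolarLengths (v w : Fin 3 → ℝ) :
    {L : ℝ | ∃ γ γ' : ℝ → (Fin 3 → ℝ),
      (∀ τ, HasDerivAt γ (γ' τ) τ) ∧ Continuous γ' ∧
      (∀ τ ∈ Set.Icc (0:ℝ) 1, γ τ ≠ 0) ∧
      γ 0 = v ∧ γ 1 = w ∧
      L = ∫ τ in (0:ℝ)..1,
        Real.sqrt ((γ' τ 0) ^ 2 + (γ' τ 1) ^ 2 + (γ' τ 2) ^ 2) /
          Real.sqrt ((γ τ 0) ^ 2 + (γ τ 1) ^ 2 + (γ τ 2) ^ 2)} =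
    logPolarLengths (WithLp.toLp 2 v : EuclideanSpace ℝ (Fin 3)) (WithLp.toLp 2 w) := by
  ext L
  constructor
  · rintro ⟨γ, γ', hγ, hγ', hne, rfl, rfl, rfl⟩
    refine ⟨fun τ => WithLp.toLp 2 (γ τ), fun τ => WithLp.toLp 2 (γ' τ),
      fun τ => (PiLp.hasFDerivAt_toLp 2 (γ τ)).comp_hasDerivAt τ (hγ τ),
      (PiLp.continuous_toLp 2 _).comp hγ', by simpa using hne, rfl, rfl, ?_⟩
    simp only [norm_toLp_fin_three]
  · rintro ⟨Γ, Γ', hΓ, hΓ', hne, h0, h1, rfl⟩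
    refine ⟨fun τ => (Γ τ).ofLp, fun τ => (Γ' τ).ofLp,
      fun τ => (PiLp.hasFDerivAt_ofLp 2 (Γ τ)).comp_hasDerivAt τ (hΓ τ),
      (PiLp.continuous_ofLp 2 _).comp hΓ', by simpa using hne, by simp [h0], by simp [h1], ?_⟩
    simp only [← norm_toLp_fin_three, WithLp.toLp_ofLp]

theorem s2r_distance_formula (d e f : ℝ) (h : d ^ 2 + e ^ 2 + f ^ 2 ≠ 0) :
    sInf {L : ℝ | ∃ γ γ' : ℝ → (Fin 3 → ℝ),
      (∀ τ, HasDerivAt γ (γ' τ) τ) ∧ Continuous γ' ∧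
      (∀ τ ∈ Set.Icc (0:ℝ) 1, γ τ ≠ 0) ∧
      γ 0 = ![1, 0, 0] ∧ γ 1 = ![d, e, f] ∧
      L = ∫ τ in (0:ℝ)..1,
        Real.sqrt ((γ' τ 0) ^ 2 + (γ' τ 1) ^ 2 + (γ' τ 2) ^ 2) /
          Real.sqrt ((γ τ 0) ^ 2 + (γ τ 1) ^ 2 + (γ τ 2) ^ 2)} =
    Real.sqrt ((Real.arccos (d / Real.sqrt (d ^ 2 + e ^ 2 + f ^ 2))) ^ 2 +
      (Real.log (Real.sqrt (d ^ 2 + e ^ 2 + f ^ 2))) ^ 2) := by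
  have hq : (WithLp.toLp 2 ![d, e, f] : EuclideanSpace ℝ (Fin 3)) ≠ 0 := by
    rw [← norm_ne_zero_iff, norm_toLp_fin_three]
    exact (Real.sqrt_pos.2 ((by positivity : (0 : ℝ) ≤ _).lt_of_ne h.symm)).ne'
  rw [setOf_lengths_eq_logPolarLengths,
    (isLeast_logPolarLengths (c := WithLp.toLp 2 ![0, 1, 0]) (by simp [norm_toLp_fin_three])
      (by simp [norm_toLp_fin_three]) (by simp [PiLp.inner_apply, Fin.sum_univ_three]) hq).csInf_eq]
  simp [logPolarDist, angle, norm_toLp_fin_three, PiLp.inner_apply, Fin.sum_univ_three]
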